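/- arXiv:1210.7780 — 5 statements merged into one kernel-verified Lean document; each statement's English description precedes it below -/
import Mathlib

section
/- For nonzero Laurent polynomials f and g in n variables over ℂ and any ν ∈ ℤⁿ, deg_ν(f·g) = deg_ν(f) + deg_ν(g). -/
/-- The ν-weighted degree of a multivariate Laurent polynomial. -/
noncomputable def wdegL {n : ℕ} (ν : Fin n → ℤ) (f : AddMonoidAlgebra ℂ (Fin n → ℤ)) : WithBot ℤ :=
  f.coeff.support.sup fun m => ((∑ i, ν i * m i : ℤ) : WithBot ℤ)

/-!
Choose exponents `a₀ ∈ supp f`, `b₀ ∈ supp g` on the `ν`-maximal faces such that `a₀ + b₀` is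
reached by exactly one pair of exponents of these faces (`ℤⁿ` has unique sums). Since maxima of
`ν` only add up to a maximum in one way, `a₀ + b₀` is then reached by exactly one pair from the
full supports, so the coefficient of `f * g` there is the nonzero product `f a₀ * g b₀`.
-/

variable {R A B : Type*}

theorem UniqueAdd.of_forall_le [Add B] [LinearOrder B] [AddLeftStrictMono B] [AddRightStrictMono B]
    {s t : Finset B} {a₀ b₀ : B} (hs : ∀ a ∈ s, a ≤ a₀) (ht : ∀ b ∈ t, b ≤ b₀) :
    UniqueAdd s t a₀ b₀ :=
  fun _ _ ha hb h => (add_eq_add_iff_eq_and_eq (hs _ ha) (ht _ hb)).mp h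

theorem UniqueSums.exists_uniqueAdd_isMaxOn [Add A] [UniqueSums A] [Add B] [LinearOrder B]
    [AddLeftStrictMono B] [AddRightStrictMono B] (w : A →ₙ+ B) {s t : Finset A}
    (hs : s.Nonempty) (ht : t.Nonempty) :
    ∃ a₀ ∈ s, ∃ b₀ ∈ t, UniqueAdd s t a₀ b₀ ∧ IsMaxOn w s a₀ ∧ IsMaxOn w t b₀ := by
  classical
  obtain ⟨a₁, ha₁, hmax_a₁⟩ := s.exists_max_image w hs
  obtain ⟨b₁, hb₁, hmax_b₁⟩ := t.exists_max_image w ht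
  obtain ⟨a₀, ha₀, b₀, hb₀, huniq⟩ := UniqueSums.uniqueAdd_of_nonempty
    (A := {a ∈ s | w a = w a₁}) (B := {b ∈ t | w b = w b₁})
    ⟨a₁, by simp [ha₁]⟩ ⟨b₁, by simp [hb₁]⟩
  rw [Finset.mem_filter] at ha₀ hb₀
  refine ⟨a₀, ha₀.1, b₀, hb₀.1, ?_, fun a ha => ha₀.2 ▸ hmax_a₁ a ha,
    fun b hb => hb₀.2 ▸ hmax_b₁ b hb⟩
  refine UniqueAdd.of_image_filter w ha₀.2 hb₀.2 (.of_forall_le ?_ ?_) huniq <;>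
    simpa only [Finset.forall_mem_image]

namespace AddMonoidAlgebra

theorem supDegree_mul_of_uniqueSums [Semiring R] [NoZeroDivisors R] [AddZeroClass A]
    [UniqueSums A] [AddCommMonoid B] [LinearOrder B] [IsOrderedCancelAddMonoid B]
    (w : A →+ B) {p q : R[A]} (hp : p ≠ 0) (hq : q ≠ 0) :
    (p * q).supDegree ((↑) ∘ w : A → WithBot B) =
      p.supDegree ((↑) ∘ w : A → WithBot B) + q.supDegree ((↑) ∘ w : A → WithBot B) := by
  obtain ⟨a₀, ha₀, b₀, hb₀, huniq, hmax_a₀, hmax_b₀⟩ :=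
    UniqueSums.exists_uniqueAdd_isMaxOn w.toAddHom
      (Finsupp.support_nonempty_iff.mpr (coeff_eq_zero.not.mpr hp))
      (Finsupp.support_nonempty_iff.mpr (coeff_eq_zero.not.mpr hq))
  have hdeg_p : p.supDegree ((↑) ∘ w : A → WithBot B) = w a₀ :=
    supDegree_eq_of_isMaxOn ha₀ fun a ha => WithBot.coe_le_coe.mpr (hmax_a₀ ha)
  have hdeg_q : q.supDegree ((↑) ∘ w : A → WithBot B) = w b₀ :=
    supDegree_eq_of_isMaxOn hb₀ fun b hb => WithBot.coe_le_coe.mpr (hmax_b₀ hb)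
  have hmem : a₀ + b₀ ∈ (p * q).coeff.support := by
    rw [Finsupp.mem_support_iff, coeff_mul_add_of_uniqueAdd huniq]
    exact mul_ne_zero (Finsupp.mem_support_iff.mp ha₀) (Finsupp.mem_support_iff.mp hb₀)
  refine le_antisymm (supDegree_mul_le fun a b => by simp) ?_
  rw [hdeg_p, hdeg_q, ← WithBot.coe_add, ← map_add]
  exact Finset.le_sup (f := ((↑) ∘ w : A → WithBot B)) hmem

end AddMonoidAlgebra

/-- for nonzero Laurent polynomials, deg_ν(f·g) = deg_ν f + deg_ν g. -/
theorem wdeg_mul {n : ℕ} (ν : Fin n → ℤ) (f g : AddMonoidAlgebra ℂ (Fin n → ℤ))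
    (hf : f ≠ 0) (hg : g ≠ 0) :
    wdegL ν (f * g) = wdegL ν f + wdegL ν g :=
  -- `wdegL ν` is definitionally `supDegree` for the weight `m ↦ ν ⬝ᵥ m`.
  AddMonoidAlgebra.supDegree_mul_of_uniqueSums (AddMonoidHom.mk' (ν ⬝ᵥ ·) (dotProduct_add ν)) hf hg
end

section
/- Ostrowski's theorem: for nonzero polynomials f and g over a field (or integral domain), the Newton polytope of the product f·g equals the Minkowski sum of the Newton polytopes of f and g. -/
open Pointwise

/-- The Newton polytope of a multivariate polynomial over a commutative ring:
the convex hull in ℝⁿ of the exponent vectors of its nonzero terms. -/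
noncomputable def newtonPolytope {n : ℕ} {R : Type*} [CommRing R]
    (f : MvPolynomial (Fin n) R) : Set (Fin n → ℝ) :=
  convexHull ℝ ((fun m i => ((m i : ℕ) : ℝ)) '' (f.support : Set (Fin n →₀ ℕ)))

/-!
Every exponent of `f * g` is a sum of exponents of `f` and `g`, which gives `⊆`. Conversely,
the convex hull of the exponents of `f * g` is closed, so it is the intersection of the half-spaces
`{l ≤ c}` containing it. For a linear functional `l`, the top `l`-weighted homogeneous component
of `f * g` is the product of those of `f` and `g`, hence nonzero over a domain. So the maximum of
`l` on the exponents of `f * g` is the sum of its maxima on those of `f` and of `g`, and no such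
half-space misses a point of the Minkowski sum.
-/

theorem Set.Finite.mem_convexHull_of_forall_exists_le {E : Type*} [TopologicalSpace E]
    [AddCommGroup E] [Module ℝ E] [IsTopologicalAddGroup E] [ContinuousSMul ℝ E]
    [LocallyConvexSpace ℝ E] [T2Space E] {s : Set E} (hs : s.Finite) {x : E}
    (hx : ∀ l : StrongDual ℝ E, ∃ y ∈ s, l x ≤ l y) : x ∈ convexHull ℝ s := by
  rw [← iInter_halfSpaces_eq (convex_convexHull ℝ s) (hs.isClosed_convexHull (𝕜 := ℝ))]
  exact Set.mem_iInter.2 fun l =>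
    (hx l).imp fun y ⟨hy, hle⟩ => ⟨subset_convexHull ℝ s hy, hle⟩

namespace MvPolynomial

open Finsupp

variable {σ R M : Type*} [CommSemiring R]

theorem weightedHomogeneousComponent_weight_ne_zero [AddCommMonoid M] (w : σ → M)
    {p : MvPolynomial σ R} {d : σ →₀ ℕ} (hd : d ∈ p.support) :
    weightedHomogeneousComponent w (weight w d) p ≠ 0 := by
  classical
  refine support_nonempty.1 ⟨d, ?_⟩
  rw [support_weightedHomogeneousComponent]
  exact Finset.mem_filter.2 ⟨hd, rfl⟩

variable [AddCommMonoid M] [LinearOrder M] [IsOrderedCancelAddMonoid M] {w : σ → M}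

theorem weightedHomogeneousComponent_mul_of_weight_le {f g : MvPolynomial σ R} {a b : M}
    (hf : ∀ d ∈ f.support, weight w d ≤ a) (hg : ∀ d ∈ g.support, weight w d ≤ b) :
    weightedHomogeneousComponent w (a + b) (f * g) =
      weightedHomogeneousComponent w a f * weightedHomogeneousComponent w b g := by
  classical
  ext d
  rw [coeff_weightedHomogeneousComponent]
  split_ifs with hd
  · rw [coeff_mul, coeff_mul]
    refine Finset.sum_congr rfl fun ⟨u, v⟩ huv => ?_
    simp only [coeff_weightedHomogeneousComponent]
    by_cases hab : weight w u = a ∧ weight w v = b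
    · rw [if_pos hab.1, if_pos hab.2]
    have hzero : coeff u f * coeff v g = 0 := by
      by_contra hne
      refine hab ((add_eq_add_iff_eq_and_eq (hf u ?_) (hg v ?_)).1 ?_)
      · exact mem_support_iff.2 (left_ne_zero_of_mul hne)
      · exact mem_support_iff.2 (right_ne_zero_of_mul hne)
      · rw [← map_add, Finset.HasAntidiagonal.mem_antidiagonal.1 huv, hd]
    rw [hzero]
    split_ifs with hu hv
    exacts [absurd ⟨hu, hv⟩ hab, (mul_zero _).symm, (zero_mul _).symm, (zero_mul _).symm]
  · exact (((weightedHomogeneousComponent_isWeightedHomogeneous a f).mul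
      (weightedHomogeneousComponent_isWeightedHomogeneous b g)).coeff_eq_zero d hd).symm

theorem exists_mem_support_mul_weight_add_le [NoZeroDivisors R] {f g : MvPolynomial σ R}
    {x y : σ →₀ ℕ} (hx : x ∈ f.support) (hy : y ∈ g.support) :
    ∃ d ∈ (f * g).support, weight w (x + y) ≤ weight w d := by
  classical
  obtain ⟨u, hu, hu_max⟩ := Finset.exists_max_image f.support (weight w) ⟨x, hx⟩
  obtain ⟨v, hv, hv_max⟩ := Finset.exists_max_image g.support (weight w) ⟨y, hy⟩
  obtain ⟨d, hd⟩ := support_nonempty.2 <| mul_ne_zero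
    (weightedHomogeneousComponent_weight_ne_zero w hu)
    (weightedHomogeneousComponent_weight_ne_zero w hv)
  rw [← weightedHomogeneousComponent_mul_of_weight_le hu_max hv_max,
    support_weightedHomogeneousComponent, Finset.mem_filter] at hd
  refine ⟨d, hd.1, ?_⟩
  rw [map_add, hd.2]
  exact add_le_add (hu_max x hx) (hv_max y hy)

end MvPolynomial

namespace Finsupp

variable {σ : Type*}

noncomputable def natCastPi : (σ →₀ ℕ) →+ (σ → ℝ) :=
  ((Nat.castAddMonoidHom ℝ).compLeft σ).comp coeFnAddHom

@[simp]
theorem natCastPi_apply (m : σ →₀ ℕ) (i : σ) : natCastPi m i = m i := rfl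

theorem map_natCastPi_eq_weight [DecidableEq σ] {F M : Type*} [AddCommMonoid M]
    [FunLike F (σ → ℝ) M] [AddMonoidHomClass F (σ → ℝ) M] (φ : F) (m : σ →₀ ℕ) :
    φ (natCastPi m) = weight (fun i => φ (Pi.single i 1)) m := by
  suffices (φ : (σ → ℝ) →+ M).comp natCastPi = weight (fun i => φ (Pi.single i 1)) from
    DFunLike.congr_fun this m
  refine addHom_ext fun i k => ?_
  have : natCastPi (single i k) = k • (Pi.single i 1 : σ → ℝ) := by
    ext j; by_cases h : j = i <;> simp [h]
  rw [AddMonoidHom.comp_apply, AddMonoidHom.coe_coe, this, map_nsmul, weight_single]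

end Finsupp

open MvPolynomial Finsupp in
theorem newtonPolytope_mul_general {n : ℕ} {R : Type*} [CommRing R] [IsDomain R]
    (f g : MvPolynomial (Fin n) R) :
    newtonPolytope (f * g) = newtonPolytope f + newtonPolytope g := by
  have newtonPolytope_eq (p : MvPolynomial (Fin n) R) :
      newtonPolytope p = convexHull ℝ (natCastPi '' (p.support : Set (Fin n →₀ ℕ))) := rfl
  rw [newtonPolytope_eq, newtonPolytope_eq, newtonPolytope_eq, ← convexHull_add, ← Set.image_add, ← Finset.coe_add]
  refine (convexHull_mono (Set.image_mono (Finset.coe_subset.2 (support_mul f g)))).antisymm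
    (convexHull_min ?_ (convex_convexHull ℝ _))
  rintro _ ⟨_, hxy, rfl⟩
  obtain ⟨x, hx, y, hy, rfl⟩ := Finset.mem_add.1 hxy
  refine ((f * g).support.finite_toSet.image _).mem_convexHull_of_forall_exists_le fun l => ?_
  obtain ⟨d, hd, hle⟩ :=
    exists_mem_support_mul_weight_add_le (w := fun i => l (Pi.single i 1)) hx hy
  refine ⟨natCastPi d, Set.mem_image_of_mem _ hd, ?_⟩
  simpa only [map_natCastPi_eq_weight] using hle

/-- Ostrowski: for nonzero polynomials over an integral domain,
the Newton polytope of the product is the Minkowski sum of the Newton polytopes. -/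
theorem newtonPolytope_mul {n : ℕ} {R : Type*} [CommRing R] [IsDomain R]
    (f g : MvPolynomial (Fin n) R) (hf : f ≠ 0) (hg : g ≠ 0) :
    newtonPolytope (f * g) = newtonPolytope f + newtonPolytope g :=
  newtonPolytope_mul_general f g
end

section
/- Let D = Σᵢ Aᵢ ∂_{Xᵢ} be a polynomial derivation on ℂ[X₁,...,Xₙ] and let f be a nonconstant Darboux polynomial of D with cofactor g, i.e., D(f) = g·f. Then for every ν ∈ ℤⁿ, deg_ν(g) ≤ max_i (deg_ν(Aᵢ) − νᵢ), where the maximum is over indices i with Aᵢ·∂_{Xᵢ}f ≠ 0. -/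
/-!
The ν-weighted degree is Mathlib's `weightedTotalDegree'` with weights ν. Over a domain it is
additive on products, since the leading weighted forms of two nonzero polynomials multiply to
the nonzero leading form of their product; it is subadditive on sums, and `∂_{X_i}` lowers it by
at least `ν_i`. Hence `deg_ν g + deg_ν f = deg_ν (∑ A_i ∂_{X_i} f)` is at most
`max_i (deg_ν A_i - ν_i) + deg_ν f` over the nonzero summands, and `deg_ν f` cancels because
`f ≠ 0`.
-/

open MvPolynomial

/-- The ν-weighted degree of a multivariate polynomial. -/
noncomputable def wdegP {n : ℕ} (ν : Fin n → ℤ) (f : MvPolynomial (Fin n) ℂ) : WithBot ℤ :=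
  f.support.sup fun m => ((∑ i, ν i * (m i : ℤ) : ℤ) : WithBot ℤ)

namespace MvPolynomial

section WeightedTotalDegree

variable {σ R M : Type*} [CommSemiring R] [AddCommMonoid M] [LinearOrder M] {w : σ → M}

theorem exists_mem_support_weightedTotalDegree'_eq {p : MvPolynomial σ R} (hp : p ≠ 0) :
    ∃ d ∈ p.support, weightedTotalDegree' w p = Finsupp.weight w d :=
  Finset.exists_mem_eq_sup _ (support_nonempty.mpr hp) _

theorem weight_le_weightedTotalDegree' {p : MvPolynomial σ R} {d : σ →₀ ℕ} (hd : d ∈ p.support) :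
    (Finsupp.weight w d : WithBot M) ≤ weightedTotalDegree' w p :=
  Finset.le_sup (f := fun d => (Finsupp.weight w d : WithBot M)) hd

theorem coeff_eq_zero_of_weightedTotalDegree'_lt {p : MvPolynomial σ R} {d : σ →₀ ℕ}
    (hd : weightedTotalDegree' w p < Finsupp.weight w d) : coeff d p = 0 :=
  notMem_support_iff.mp fun hmem => (weight_le_weightedTotalDegree' hmem).not_gt hd

theorem weightedTotalDegree'_mul_le [IsOrderedAddMonoid M] (p q : MvPolynomial σ R) :
    weightedTotalDegree' w (p * q) ≤ weightedTotalDegree' w p + weightedTotalDegree' w q := by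
  classical
  refine Finset.sup_le fun d hd => ?_
  obtain ⟨a, ha, b, hb, rfl⟩ := Finset.mem_add.mp (support_mul p q hd)
  rw [map_add, WithBot.coe_add]
  exact add_le_add (weight_le_weightedTotalDegree' ha) (weight_le_weightedTotalDegree' hb)

theorem weightedTotalDegree'_sum_le {ι : Type*} (s : Finset ι) (p : ι → MvPolynomial σ R) :
    weightedTotalDegree' w (∑ i ∈ s, p i) ≤ s.sup fun i => weightedTotalDegree' w (p i) := by
  classical
  calc weightedTotalDegree' w (∑ i ∈ s, p i)
      ≤ (s.biUnion fun i => (p i).support).sup fun d => (Finsupp.weight w d : WithBot M) :=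
        Finset.sup_mono support_sum
    _ = _ := Finset.sup_biUnion _ _

theorem le_weightedTotalDegree'_of_weightedHomogeneousComponent_ne_zero {p : MvPolynomial σ R}
    {m : M} (hm : weightedHomogeneousComponent w m p ≠ 0) :
    (m : WithBot M) ≤ weightedTotalDegree' w p := by
  classical
  obtain ⟨d, hd⟩ := ne_zero_iff.mp hm
  rw [coeff_weightedHomogeneousComponent] at hd
  split_ifs at hd with hdm
  · exact hdm ▸ weight_le_weightedTotalDegree' (mem_support_iff.mpr hd)
  · exact absurd rfl hd

theorem weightedHomogeneousComponent_weightedTotalDegree'_ne_zero {p : MvPolynomial σ R} {m : M}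
    (hm : weightedTotalDegree' w p = m) : weightedHomogeneousComponent w m p ≠ 0 := by
  classical
  have hp : p ≠ 0 := by
    rintro rfl
    rw [weightedTotalDegree'_zero] at hm
    exact WithBot.bot_ne_coe hm
  obtain ⟨d, hd, hdm⟩ := exists_mem_support_weightedTotalDegree'_eq (w := w) hp
  rw [hm, WithBot.coe_inj] at hdm
  refine ne_zero_iff.mpr ⟨d, ?_⟩
  rwa [coeff_weightedHomogeneousComponent, if_pos hdm.symm, ← mem_support_iff]

theorem weightedTotalDegree'_pderiv_add_le (i : σ) (p : MvPolynomial σ R) :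
    weightedTotalDegree' w (pderiv i p) + w i ≤ weightedTotalDegree' w p := by
  by_cases h : pderiv i p = 0
  · simp [h, weightedTotalDegree'_zero]
  obtain ⟨d, hd, hdeg⟩ := exists_mem_support_weightedTotalDegree'_eq (w := w) h
  have hd' : d + Finsupp.single i 1 ∈ p.support := by
    rw [mem_support_iff, coeff_pderiv] at hd
    exact mem_support_iff.mpr (left_ne_zero_of_mul hd)
  calc weightedTotalDegree' w (pderiv i p) + w i
      = (Finsupp.weight w (d + Finsupp.single i 1) : WithBot M) := by
        rw [hdeg, map_add, Finsupp.weight_single, one_smul, WithBot.coe_add]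
    _ ≤ weightedTotalDegree' w p := weight_le_weightedTotalDegree' hd'

variable [IsOrderedCancelAddMonoid M]

theorem weightedHomogeneousComponent_mul_of_weightedTotalDegree'_le {p q : MvPolynomial σ R}
    {a b : M} (hp : weightedTotalDegree' w p ≤ a) (hq : weightedTotalDegree' w q ≤ b) :
    weightedHomogeneousComponent w (a + b) (p * q) =
      weightedHomogeneousComponent w a p * weightedHomogeneousComponent w b q := by
  classical
  ext d
  rw [coeff_weightedHomogeneousComponent]
  split_ifs with hd
  · rw [coeff_mul, coeff_mul]
    refine Finset.sum_congr rfl fun x hx => ?_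
    rw [Finset.HasAntidiagonal.mem_antidiagonal] at hx
    rw [← hx, map_add] at hd
    simp only [coeff_weightedHomogeneousComponent]
    rcases trichotomy_of_add_eq_add hd.symm with h | h | h
    · rw [if_pos h.1.symm, if_pos h.2.symm]
    · rw [if_neg h.ne', zero_mul, coeff_eq_zero_of_weightedTotalDegree'_lt
        (hp.trans_lt (WithBot.coe_lt_coe.mpr h)), zero_mul]
    · rw [if_neg h.ne', mul_zero, coeff_eq_zero_of_weightedTotalDegree'_lt
        (hq.trans_lt (WithBot.coe_lt_coe.mpr h)), mul_zero]
  · exact ((weightedHomogeneousComponent_isWeightedHomogeneous a p).mul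
      (weightedHomogeneousComponent_isWeightedHomogeneous b q)).coeff_eq_zero d hd |>.symm

theorem weightedTotalDegree'_mul [NoZeroDivisors R] (p q : MvPolynomial σ R) :
    weightedTotalDegree' w (p * q) = weightedTotalDegree' w p + weightedTotalDegree' w q := by
  refine (weightedTotalDegree'_mul_le p q).antisymm ?_
  by_cases hp : p = 0
  · simp [hp, weightedTotalDegree'_zero]
  by_cases hq : q = 0
  · simp [hq, weightedTotalDegree'_zero]
  obtain ⟨a, ha⟩ := WithBot.ne_bot_iff_exists.mp ((weightedTotalDegree'_eq_bot_iff w p).not.mpr hp)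
  obtain ⟨b, hb⟩ := WithBot.ne_bot_iff_exists.mp ((weightedTotalDegree'_eq_bot_iff w q).not.mpr hq)
  rw [← ha, ← hb, ← WithBot.coe_add]
  refine le_weightedTotalDegree'_of_weightedHomogeneousComponent_ne_zero ?_
  rw [weightedHomogeneousComponent_mul_of_weightedTotalDegree'_le ha.ge hb.ge]
  exact mul_ne_zero (weightedHomogeneousComponent_weightedTotalDegree'_ne_zero ha.symm)
    (weightedHomogeneousComponent_weightedTotalDegree'_ne_zero hb.symm)

end WeightedTotalDegree

theorem weightedTotalDegree'_mul_pderiv_le {σ R M : Type*} [CommSemiring R] [AddCommGroup M]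
    [LinearOrder M] [IsOrderedAddMonoid M] (w : σ → M) (a p : MvPolynomial σ R) (i : σ) :
    weightedTotalDegree' w (a * pderiv i p) ≤
      (weightedTotalDegree' w a).map (· - w i) + weightedTotalDegree' w p := by
  refine (weightedTotalDegree'_mul_le a (pderiv i p)).trans ?_
  induction weightedTotalDegree' w a using WithBot.recBotCoe with
  | bot => simp
  | coe x =>
    calc (x : WithBot M) + weightedTotalDegree' w (pderiv i p)
        = ↑(x - w i) + (weightedTotalDegree' w (pderiv i p) + w i) := by
          rw [← add_assoc, add_right_comm, ← WithBot.coe_add, sub_add_cancel]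
      _ ≤ _ := add_le_add le_rfl (weightedTotalDegree'_pderiv_add_le i p)

end MvPolynomial

theorem wdegP_eq_weightedTotalDegree' {n : ℕ} (ν : Fin n → ℤ) (p : MvPolynomial (Fin n) ℂ) :
    wdegP ν p = weightedTotalDegree' ν p := by
  unfold wdegP weightedTotalDegree'
  congr 1
  funext m
  simp [Finsupp.weight_eq_sum, mul_comm]

/-- if f is a nonconstant Darboux polynomial of D = Σᵢ Aᵢ∂_{Xᵢ} with
cofactor g, then deg_ν(g) ≤ max over i with Aᵢ·∂_{Xᵢ}f ≠ 0 of (deg_ν(Aᵢ) − νᵢ). -/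
theorem wdeg_cofactor_le {n : ℕ} (A : Fin n → MvPolynomial (Fin n) ℂ)
    (f g : MvPolynomial (Fin n) ℂ) (hf : f.totalDegree ≠ 0)
    (hD : ∑ i, A i * pderiv i f = g * f) (ν : Fin n → ℤ) :
    wdegP ν g ≤ (Finset.univ.filter fun i => A i * pderiv i f ≠ 0).sup
      (fun i => (wdegP ν (A i)).map fun a => a - ν i) := by
  set S := Finset.univ.filter fun i => A i * pderiv i f ≠ 0
  have hf0 : weightedTotalDegree' ν f ≠ ⊥ := by
    rw [Ne, weightedTotalDegree'_eq_bot_iff]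
    rintro rfl
    exact hf totalDegree_zero
  simp only [wdegP_eq_weightedTotalDegree']
  refine (WithBot.add_le_add_iff_right hf0).mp ?_
  calc weightedTotalDegree' ν g + weightedTotalDegree' ν f
      = weightedTotalDegree' ν (∑ i ∈ S, A i * pderiv i f) := by
        rw [Finset.sum_filter_ne_zero, hD, weightedTotalDegree'_mul]
    _ ≤ S.sup fun i => weightedTotalDegree' ν (A i * pderiv i f) :=
        weightedTotalDegree'_sum_le _ _
    _ ≤ _ := Finset.sup_le fun i hi => (weightedTotalDegree'_mul_pderiv_le ν _ f i).trans
        (add_le_add (Finset.le_sup (f := fun i => (weightedTotalDegree' ν (A i)).map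
          (· - ν i)) hi) le_rfl)
end

section
/- Let p ∈ ℂ[X₁] be a polynomial of degree d, let α be a root of p, and let ξ₂,...,ξₙ be complex numbers such that p'(α), ξ₂,...,ξₙ are linearly independent over ℤ. Then the derivation D = p(X₁)∂_{X₁} + ξ₂X₂∂_{X₂} + ··· + ξₙXₙ∂_{Xₙ} has no nonconstant rational first integral. -/
/-!
Translate the fixed point `(α, 0, …, 0)` to the origin. There the derivation has diagonal linear
part with eigenvalues `p'(α), ξ₂, …, ξₙ`, and its remaining part raises the order of vanishing
at the origin. Write a first integral as a reduced fraction `a / b`; from `D(a / b) = 0` and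
coprimality, `b ∣ D b`, so `a` and `b` are Darboux polynomials with a common cofactor `Λ`.
Comparing lowest-order terms, a lowest-degree monomial `m` of a Darboux polynomial satisfies
`∑ mᵢ ξᵢ = Λ(0)`, and ℤ-independence of the `ξᵢ` makes `m` unique. Subtracting from `a` the
multiple of `b` with the same coefficient at `m` leaves a Darboux polynomial without that
monomial, which must therefore vanish: `a = c b`.
-/

open MvPolynomial

/-- The field of rational functions ℂ(X₁,…,Xₙ). -/
abbrev RatFunField (n : ℕ) := FractionRing (MvPolynomial (Fin n) ℂ)

theorem Finsupp.weight_injective_of_linearIndependent {σ M : Type*} [AddCommGroup M]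
    {w : σ → M} (hw : LinearIndependent ℤ w) :
    Function.Injective (Finsupp.weight w : (σ →₀ ℕ) → M) := by
  have hcomp : (Finsupp.weight w : (σ →₀ ℕ) → M) =
      Finsupp.linearCombination ℤ w ∘ Finsupp.mapRange (Nat.cast : ℕ → ℤ) Nat.cast_zero := by
    ext u
    simp [Finsupp.weight_apply, Finsupp.linearCombination_apply, Finsupp.sum_mapRange_index]
  rw [hcomp]
  exact Function.Injective.comp hw (Finsupp.mapRange_injective _ Nat.cast_zero Nat.cast_injective)

theorem Ideal.mul_mem_pow_add {A : Type*} [CommSemiring A] {I : Ideal A} {x y : A} {a b : ℕ}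
    (hx : x ∈ I ^ a) (hy : y ∈ I ^ b) : x * y ∈ I ^ (a + b) :=
  pow_add I a b ▸ Ideal.mul_mem_mul hx hy

theorem Polynomial.aeval_mem_pow_of_X_pow_dvd {R A : Type*} [CommSemiring R] [CommSemiring A]
    [Algebra R A] {I : Ideal A} {f : A} (hf : f ∈ I) {q : Polynomial R} {k : ℕ}
    (hq : Polynomial.X ^ k ∣ q) : Polynomial.aeval f q ∈ I ^ k := by
  obtain ⟨r, rfl⟩ := hq
  rw [map_mul, map_pow, Polynomial.aeval_X]
  exact Ideal.mul_mem_right _ _ (Ideal.pow_mem_pow hf k)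

def Derivation.conjAlgEquiv {R A B : Type*} [CommSemiring R] [CommSemiring A] [CommSemiring B]
    [Algebra R A] [Algebra R B] (e : A ≃ₐ[R] B) (D : Derivation R A A) : Derivation R B B where
  toLinearMap := (e.toLinearMap : A →ₗ[R] B) ∘ₗ (D : A →ₗ[R] A) ∘ₗ e.symm.toLinearMap
  map_one_eq_zero' := by simp
  leibniz' a b := by simp [smul_eq_mul]

@[simp]
theorem Derivation.conjAlgEquiv_apply {R A B : Type*} [CommSemiring R] [CommSemiring A]
    [CommSemiring B] [Algebra R A] [Algebra R B] (e : A ≃ₐ[R] B) (D : Derivation R A A) (b : B) :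
    D.conjAlgEquiv e b = e (D (e.symm b)) :=
  rfl

theorem IsFractionRing.exists_darboux_quotient_of_derivation_eq_zero {R A K : Type*} [CommRing R]
    [CommRing A] [IsDomain A] [UniqueFactorizationMonoid A] [Field K] [Algebra A K]
    [IsFractionRing A K] [Algebra R K] {D : Derivation R K K} {Δ : A → A}
    (hΔ : ∀ a, D (algebraMap A K a) = algebraMap A K (Δ a)) {F : K} (hF : D F = 0) :
    ∃ a b Λ : A, b ≠ 0 ∧ F * algebraMap A K b = algebraMap A K a ∧
      Δ a = Λ * a ∧ Δ b = Λ * b := by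
  obtain ⟨a, ⟨b, hb⟩, hab, rfl⟩ := exists_reduced_fraction A F
  have hb0 : b ≠ 0 := nonZeroDivisors.ne_zero hb
  have hFb := IsLocalization.mk'_spec K a ⟨b, hb⟩
  have hcross : Δ a * b = a * Δ b := by
    have hDa := congrArg D hFb
    rw [D.leibniz, hF, smul_zero, add_zero, smul_eq_mul, hΔ, hΔ] at hDa
    apply IsFractionRing.injective A K
    rw [map_mul, map_mul, ← hDa, ← hFb]
    ring
  obtain ⟨Λ, hΛ⟩ := hab.symm.dvd_of_dvd_mul_left (Dvd.intro_left _ hcross)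
  refine ⟨a, b, Λ, hb0, hFb, mul_right_cancel₀ hb0 ?_, by rw [hΛ]; ring⟩
  rw [hcross, hΛ]
  ring

namespace MvPolynomial

theorem derivation_algebraMap_eq_mkDerivation {σ R K : Type*} [CommSemiring R]
    [CommSemiring K] [Algebra R K] [Algebra (MvPolynomial σ R) K]
    [IsScalarTower R (MvPolynomial σ R) K] (D : Derivation R K K) (v : σ → MvPolynomial σ R)
    (hv : ∀ i, D (algebraMap _ K (X i : MvPolynomial σ R)) = algebraMap _ K (v i))
    (f : MvPolynomial σ R) : D (algebraMap _ K f) = algebraMap _ K (mkDerivation R v f) :=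
  DFunLike.congr_fun (derivation_ext (D₁ := D.compAlgebraMap (MvPolynomial σ R))
    (D₂ := (Algebra.linearMap (MvPolynomial σ R) K).compDer (mkDerivation R v))
    (by simpa using hv)) f

variable {R σ : Type*} [CommRing R]

noncomputable def translation (v : σ → R) : MvPolynomial σ R ≃ₐ[R] MvPolynomial σ R :=
  AlgEquiv.ofAlgHom (aeval fun i => X i + C (v i)) (aeval fun i => X i - C (v i))
    (algHom_ext fun i => by simp) (algHom_ext fun i => by simp)

@[simp]
theorem translation_X (v : σ → R) (i : σ) : translation v (X i) = X i + C (v i) :=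
  aeval_X _ _

@[simp]
theorem translation_symm_X (v : σ → R) (i : σ) :
    (translation v).symm (X i) = X i - C (v i) :=
  aeval_X _ _

theorem X_mem_idealOfVars (i : σ) : (X i : MvPolynomial σ R) ∈ idealOfVars σ R :=
  Ideal.subset_span (Set.mem_range_self i)

theorem monomial_mem_pow_idealOfVars (s : σ →₀ ℕ) (r : R) :
    monomial s r ∈ idealOfVars σ R ^ s.degree :=
  (mem_pow_idealOfVars_iff _ _).2 fun x hx => by
    rw [Finset.mem_singleton.1 (support_monomial_subset hx)]

theorem aeval_X_add_C_sub_mem_pow_idealOfVars (p : Polynomial R) {α : R} (hα : p.eval α = 0)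
    (i : σ) :
    Polynomial.aeval (X i + C α) p - p.derivative.eval α • X i ∈ idealOfVars σ R ^ 2 := by
  have hdvd : Polynomial.X ^ 2 ∣
      p.taylor α - Polynomial.C (p.derivative.eval α) * Polynomial.X := by
    refine Polynomial.X_pow_dvd_iff.2 fun d hd => ?_
    interval_cases d <;> simp [Polynomial.taylor_coeff_zero, Polynomial.taylor_coeff_one, hα]
  simpa [Polynomial.taylor_apply, Polynomial.aeval_comp, smul_eq_C_mul] using
    Polynomial.aeval_mem_pow_of_X_pow_dvd (X_mem_idealOfVars (R := R) i) hdvd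

theorem mkDerivation_smul_X_monomial (w : σ → R) (s : σ →₀ ℕ) (r : R) :
    mkDerivation R (fun i => w i • X i) (monomial s r) = Finsupp.weight w s • monomial s r := by
  induction s using Finsupp.induction_linear generalizing r with
  | zero => simp [← C_apply]
  | add f g hf hg =>
    rw [← mul_one r, ← monomial_mul, Derivation.leibniz, hf, hg, map_add, add_smul]
    simp only [smul_eq_C_mul]
    ring
  | single i k =>
    rcases Nat.eq_zero_or_pos k with rfl | hk
    · simp [← C_apply]
    rw [← C_mul_X_pow_eq_monomial, Derivation.leibniz, Derivation.leibniz_pow, derivation_C,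
      smul_zero, add_zero, mkDerivation_X, Finsupp.weight_single]
    simp only [smul_eq_C_mul, nsmul_eq_mul, map_mul, map_natCast]
    rw [← pow_sub_one_mul hk.ne']
    ring

theorem coeff_mkDerivation_smul_X (w : σ → R) (u : σ →₀ ℕ) (f : MvPolynomial σ R) :
    coeff u (mkDerivation R (fun i => w i • X i) f) = Finsupp.weight w u * coeff u f := by
  classical
  induction f using induction_on' with
  | monomial s r =>
    rw [mkDerivation_smul_X_monomial, coeff_smul, coeff_monomial, smul_eq_mul]
    split_ifs with h
    · rw [h]
    · simp
  | add f g hf hg => simp only [map_add, coeff_add, hf, hg, mul_add]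

variable {D : Derivation R (MvPolynomial σ R) (MvPolynomial σ R)}

theorem derivation_monomial_mem_pow_idealOfVars (hD : ∀ i, D (X i) ∈ idealOfVars σ R ^ 2)
    (s : σ →₀ ℕ) (r : R) : D (monomial s r) ∈ idealOfVars σ R ^ (s.degree + 1) := by
  induction s using Finsupp.induction_linear generalizing r with
  | zero => simp [← C_apply]
  | add f g hf hg =>
    rw [← mul_one r, ← monomial_mul, Derivation.leibniz, smul_eq_mul, smul_eq_mul, map_add]
    refine Ideal.add_mem _ ?_ ?_
    · convert Ideal.mul_mem_pow_add (monomial_mem_pow_idealOfVars f r) (hg 1) using 2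
      omega
    · convert Ideal.mul_mem_pow_add (monomial_mem_pow_idealOfVars g 1) (hf r) using 2
      omega
  | single i k =>
    rcases Nat.eq_zero_or_pos k with rfl | hk
    · simp [← C_apply]
    rw [← C_mul_X_pow_eq_monomial, Derivation.leibniz, Derivation.leibniz_pow, derivation_C,
      smul_zero, add_zero, Finsupp.degree_single]
    refine Ideal.mul_mem_left _ _ (Submodule.smul_of_tower_mem _ _ ?_)
    rw [smul_eq_mul]
    convert Ideal.mul_mem_pow_add (Ideal.pow_mem_pow (X_mem_idealOfVars i) _) (hD i) using 2
    omega

theorem derivation_mem_pow_idealOfVars_succ (hD : ∀ i, D (X i) ∈ idealOfVars σ R ^ 2) {t : ℕ}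
    {f : MvPolynomial σ R} (hf : f ∈ idealOfVars σ R ^ t) : D f ∈ idealOfVars σ R ^ (t + 1) := by
  rw [f.as_sum, map_sum]
  refine Ideal.sum_mem _ fun s hs => ?_
  exact Ideal.pow_le_pow_right (by have := (mem_pow_idealOfVars_iff _ _).1 hf s hs; omega)
    (derivation_monomial_mem_pow_idealOfVars hD s _)

theorem coeff_derivation_of_mem_pow_idealOfVars {w : σ → R}
    (hD : ∀ i, D (X i) - w i • X i ∈ idealOfVars σ R ^ 2) {t : ℕ} {f : MvPolynomial σ R}
    (hf : f ∈ idealOfVars σ R ^ t) {u : σ →₀ ℕ} (hu : u.degree ≤ t) :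
    coeff u (D f) = Finsupp.weight w u * coeff u f := by
  set D₀ : Derivation R (MvPolynomial σ R) (MvPolynomial σ R) :=
    mkDerivation R (fun i => w i • X i)
  have hrest : (D - D₀) f ∈ idealOfVars σ R ^ (t + 1) :=
    derivation_mem_pow_idealOfVars_succ (fun i => by simpa [D₀] using hD i) hf
  have : coeff u ((D - D₀) f) = 0 := (mem_pow_idealOfVars_iff' _ _).1 hrest u (by omega)
  rw [Derivation.sub_apply, coeff_sub, sub_eq_zero] at this
  rw [this, coeff_mkDerivation_smul_X]

theorem exists_weight_eq_constantCoeff_of_eq_mul [IsDomain R] {w : σ → R}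
    (hD : ∀ i, D (X i) - w i • X i ∈ idealOfVars σ R ^ 2) {c Λ : MvPolynomial σ R} (hc : c ≠ 0)
    (h : D c = Λ * c) : ∃ m, coeff m c ≠ 0 ∧ Finsupp.weight w m = constantCoeff Λ := by
  obtain ⟨m, hm, hmin⟩ :=
    Finset.exists_min_image c.support Finsupp.degree (support_nonempty.2 hc)
  have hc_mem : c ∈ idealOfVars σ R ^ m.degree := (mem_pow_idealOfVars_iff _ _).2 hmin
  have hΛ : Λ - C (constantCoeff Λ) ∈ idealOfVars σ R ^ 1 :=
    (mem_pow_idealOfVars_iff' _ _).2 fun x hx => by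
      obtain rfl : x = 0 := (Finsupp.degree_eq_zero_iff x).1 (by omega)
      simp [constantCoeff_eq]
  have hhigher : coeff m ((Λ - C (constantCoeff Λ)) * c) = 0 :=
    (mem_pow_idealOfVars_iff' _ _).1 (Ideal.mul_mem_pow_add hΛ hc_mem) m (by omega)
  rw [sub_mul, coeff_sub, coeff_C_mul, sub_eq_zero] at hhigher
  refine ⟨m, mem_support_iff.1 hm, mul_right_cancel₀ (mem_support_iff.1 hm) ?_⟩
  rw [← coeff_derivation_of_mem_pow_idealOfVars hD hc_mem le_rfl, h, hhigher]

theorem exists_eq_C_mul_of_eq_mul {K : Type*} [Field K] {w : σ → K}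
    {D : Derivation K (MvPolynomial σ K) (MvPolynomial σ K)}
    (hD : ∀ i, D (X i) - w i • X i ∈ idealOfVars σ K ^ 2)
    (hw : Function.Injective (Finsupp.weight w : (σ →₀ ℕ) → K)) {a b Λ : MvPolynomial σ K}
    (ha : D a = Λ * a) (hb : D b = Λ * b) (hb0 : b ≠ 0) : ∃ c, a = C c * b := by
  obtain ⟨m, hbm, hm⟩ := exists_weight_eq_constantCoeff_of_eq_mul hD hb0 hb
  set c := coeff m a / coeff m b
  refine ⟨c, sub_eq_zero.1 (by_contra fun hne => ?_)⟩
  have hdiff : D (a - C c * b) = Λ * (a - C c * b) := by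
    rw [map_sub, ← smul_eq_C_mul, D.map_smul, ha, hb, smul_eq_C_mul, smul_eq_C_mul]
    ring
  obtain ⟨m', hm'0, hm'⟩ := exists_weight_eq_constantCoeff_of_eq_mul hD hne hdiff
  obtain rfl : m' = m := hw (hm'.trans hm.symm)
  exact hm'0 (by rw [coeff_sub, coeff_C_mul, div_mul_cancel₀ _ hbm, sub_self])

end MvPolynomial

theorem no_rational_first_integral_general {n : ℕ} [NeZero n]
    (p : Polynomial ℂ)
    (α : ℂ) (hα : p.eval α = 0)
    (ξ : Fin n → ℂ) (hξ0 : ξ 0 = p.derivative.eval α)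
    (hindep : LinearIndependent ℤ ξ)
    (D : Derivation ℂ (RatFunField n) (RatFunField n))
    (hD0 : D (algebraMap (MvPolynomial (Fin n) ℂ) (RatFunField n) (X 0))
      = algebraMap (MvPolynomial (Fin n) ℂ) (RatFunField n) (Polynomial.aeval (X 0) p))
    (hDi : ∀ i : Fin n, i ≠ 0 →
      D (algebraMap (MvPolynomial (Fin n) ℂ) (RatFunField n) (X i))
        = ξ i • algebraMap (MvPolynomial (Fin n) ℂ) (RatFunField n) (X i)) :
    ∀ F : RatFunField n, D F = 0 → ∃ c : ℂ, F = algebraMap ℂ (RatFunField n) c := by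
  intro F hF
  set Δ : Derivation ℂ (MvPolynomial (Fin n) ℂ) (MvPolynomial (Fin n) ℂ) :=
    mkDerivation ℂ fun i => if i = 0 then Polynomial.aeval (X 0) p else ξ i • X i
  have hrestrict : ∀ f, D (algebraMap _ _ f) = algebraMap _ (RatFunField n) (Δ f) :=
    derivation_algebraMap_eq_mkDerivation D _ fun i => by
      split_ifs with h
      · subst h; exact hD0
      · rw [hDi i h, smul_eq_C_mul, map_mul, Algebra.smul_def, ← algebraMap_eq,
          ← IsScalarTower.algebraMap_apply]
  obtain ⟨a, b, Λ, hb0, hFb, ha, hb⟩ :=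
    IsFractionRing.exists_darboux_quotient_of_derivation_eq_zero hrestrict hF
  set e := translation (Pi.single 0 α : Fin n → ℂ)
  have hlin : ∀ i, Δ.conjAlgEquiv e (X i) - ξ i • X i ∈ idealOfVars (Fin n) ℂ ^ 2 := by
    intro i
    rcases eq_or_ne i 0 with rfl | hi
    · simpa [Δ, e, hξ0, ← Polynomial.aeval_algHom_apply] using
        aeval_X_add_C_sub_mem_pow_idealOfVars p hα (0 : Fin n)
    · simp [Δ, e, hi]
  have hconj : ∀ {c}, Δ c = Λ * c → Δ.conjAlgEquiv e (e c) = e Λ * e c := fun h => by simp [h]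
  obtain ⟨c, hc⟩ := exists_eq_C_mul_of_eq_mul hlin
    (Finsupp.weight_injective_of_linearIndependent hindep) (hconj ha) (hconj hb)
    (by simpa using hb0)
  have hab : a = C c * b := e.injective (by rw [hc, map_mul, ← algebraMap_eq, AlgEquiv.commutes])
  refine ⟨c, mul_right_cancel₀ (IsFractionRing.to_map_ne_zero_of_mem_nonZeroDivisors
    (mem_nonZeroDivisors_of_ne_zero hb0)) ?_⟩
  rw [hFb, hab, map_mul, ← algebraMap_eq, ← IsScalarTower.algebraMap_apply]

/-- for p with root α such that p'(α), ξ₂,…,ξₙ are ℤ-linearly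
independent, the derivation D = p(X₁)∂_{X₁} + Σ_{i≥2} ξᵢXᵢ∂_{Xᵢ} has no nonconstant
rational first integral. -/
theorem no_rational_first_integral {n : ℕ} [NeZero n]
    (p : Polynomial ℂ) (d : ℕ) (hd : p.natDegree = d)
    (α : ℂ) (hα : p.eval α = 0)
    (ξ : Fin n → ℂ) (hξ0 : ξ 0 = p.derivative.eval α)
    (hindep : LinearIndependent ℤ ξ)
    (D : Derivation ℂ (RatFunField n) (RatFunField n))
    (hD0 : D (algebraMap (MvPolynomial (Fin n) ℂ) (RatFunField n) (X 0))
      = algebraMap (MvPolynomial (Fin n) ℂ) (RatFunField n) (Polynomial.aeval (X 0) p))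
    (hDi : ∀ i : Fin n, i ≠ 0 →
      D (algebraMap (MvPolynomial (Fin n) ℂ) (RatFunField n) (X i))
        = ξ i • algebraMap (MvPolynomial (Fin n) ℂ) (RatFunField n) (X i)) :
    ∀ F : RatFunField n, D F = 0 → ∃ c : ℂ, F = algebraMap ℂ (RatFunField n) c :=
  no_rational_first_integral_general p α hα ξ hξ0 hindep D hD0 hDi
end

section
/- Let D = p(X₁)∂_{X₁} + ξ₂X₂∂_{X₂} + ··· + ξₙXₙ∂_{Xₙ} with p ∈ ℂ[X₁] of degree d ≥ 1 and ξᵢ ∈ ℂ*. If g is the cofactor of any Darboux polynomial of D, then g is a polynomial in X₁ alone of degree at most d − 1; consequently the cofactors lie in a ℂ-vector space of dimension d. -/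
/-!
On generators, `D` raises the degree in `X₀` by at most `d - 1` and the degree in any other
variable not at all; by the Leibniz rule the same holds for every polynomial. Over a domain the
degree in each variable is additive, so `D f = g * f` with `f ≠ 0` bounds the degree of the
cofactor `g` in `X₀` by `d - 1` and in every other variable by `0`. Hence `g` is the image of a
univariate polynomial of degree `< d`, and these images form a `d`-dimensional space.
-/

open MvPolynomial

namespace Polynomial

section CommSemiring

variable {R σ : Type*} [CommSemiring R]

theorem degreeOf_toMvPolynomial_self (i : σ) (q : R[X]) :
    degreeOf i (q.toMvPolynomial i) = q.natDegree := by
  classical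
  have hmap : (optionEquivLeft R {b // b ≠ i}).toAlgHom.comp (toMvPolynomial none) =
      mapAlgHom (Algebra.ofId R (MvPolynomial {b // b ≠ i} R)) := by
    ext; simp [optionEquivLeft_X_none]
  have hq := DFunLike.congr_fun hmap q
  rw [AlgHom.comp_apply, AlgEquiv.coe_toAlgHom] at hq
  rw [degreeOf_eq_natDegree, rename_toMvPolynomial, Equiv.optionSubtypeNe_symm_self, hq,
    coe_mapAlgHom]
  exact natDegree_map_eq_of_injective (MvPolynomial.C_injective _ _) q

theorem degreeOf_toMvPolynomial_of_ne {i j : σ} (h : i ≠ j) (q : R[X]) :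
    degreeOf i (q.toMvPolynomial j) = 0 := by
  classical
  by_contra hi
  rw [← Ne, ← mem_vars_iff_degreeOf_ne_zero, toMvPolynomial_eq_rename_comp] at hi
  obtain ⟨u, -, rfl⟩ := Finset.mem_image.mp (vars_rename _ _ hi)
  exact h rfl

theorem exists_toMvPolynomial_eq_of_degreeOf_eq_zero {g : MvPolynomial σ R} {j : σ}
    (h : ∀ i ≠ j, degreeOf i g = 0) : ∃ q : R[X], q.toMvPolynomial j = g := by
  have hvars : (g.vars : Set σ) ⊆ Set.range fun _ : Unit => j := fun i hi =>
    ⟨(), by_contra fun hij => mem_vars_iff_degreeOf_ne_zero.mp hi (h i (Ne.symm hij))⟩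
  obtain ⟨u, rfl⟩ := g.exists_rename_eq_of_vars_subset_range _ (fun _ _ _ => rfl) hvars
  refine ⟨uniqueAlgEquiv R Unit u, ?_⟩
  rw [toMvPolynomial_eq_rename_comp, AlgHom.comp_apply, AlgEquiv.coe_toAlgHom,
    AlgEquiv.symm_apply_apply]

end CommSemiring

theorem finrank_map_toMvPolynomial_degreeLT {R σ : Type*} [CommRing R] [StrongRankCondition R]
    (i : σ) (d : ℕ) :
    Module.finrank R ((degreeLT R d).map (toMvPolynomial (R := R) i).toLinearMap) = d := by
  rw [← (Submodule.equivMapOfInjective _ (toMvPolynomial_injective i) _).finrank_eq,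
    (degreeLTEquiv R d).finrank_eq, Module.finrank_fin_fun]

end Polynomial

namespace MvPolynomial

variable {R σ : Type*} [CommSemiring R] [NoZeroDivisors R]

theorem degreeOf_derivation_le (D : Derivation R (MvPolynomial σ R) (MvPolynomial σ R))
    {i : σ} {k : ℕ} (hD : ∀ j, degreeOf i (D (X j)) ≤ degreeOf i (X j : MvPolynomial σ R) + k)
    (f : MvPolynomial σ R) : degreeOf i (D f) ≤ degreeOf i f + k := by
  have hmonomial : ∀ s a, degreeOf i (D (monomial s a)) ≤ degreeOf i (monomial s a) + k := by
    refine induction_on_monomial (fun a => by simp) fun p j ih => ?_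
    rcases eq_or_ne p 0 with rfl | hp
    · simp
    have : Nontrivial R := let ⟨_, hs⟩ := ne_zero_iff.mp hp; nontrivial_of_ne _ _ hs
    calc degreeOf i (D (p * X j)) = degreeOf i (p * D (X j) + X j * D p) := by
          rw [Derivation.leibniz, smul_eq_mul, smul_eq_mul]
      _ ≤ degreeOf i p + degreeOf i (X j) + k := by
          refine (degreeOf_add_le _ _ _).trans (max_le ?_ ?_)
          · linarith [degreeOf_mul_le i p (D (X j)), hD j]
          · linarith [degreeOf_mul_le i (X j) (D p)]
      _ = degreeOf i (p * X j) + k := by rw [degreeOf_mul_eq hp (X_ne_zero j)]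
  conv_lhs => rw [f.as_sum, map_sum]
  refine (degreeOf_sum_le _ _ _).trans (Finset.sup_le fun s hs => (hmonomial s _).trans ?_)
  rw [degreeOf_monomial_eq s i (mem_support_iff.mp hs)]
  exact Nat.add_le_add_right (monomial_le_degreeOf i hs) k

theorem degreeOf_le_of_derivation_eq_mul
    (D : Derivation R (MvPolynomial σ R) (MvPolynomial σ R))
    {i : σ} {k : ℕ} (hD : ∀ j, degreeOf i (D (X j)) ≤ degreeOf i (X j : MvPolynomial σ R) + k)
    {f g : MvPolynomial σ R} (hf : f ≠ 0) (hfg : D f = g * f) : degreeOf i g ≤ k := by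
  rcases eq_or_ne g 0 with rfl | hg
  · simp
  have h := degreeOf_derivation_le D hD f
  rw [hfg, degreeOf_mul_eq hg hf] at h
  omega

end MvPolynomial

theorem cofactor_univariate_of_product_system_general {n d : ℕ} [NeZero n]
    (p : Polynomial ℂ) (hdeg : p.natDegree = d) (hd : 1 ≤ d)
    (ξ : Fin n → ℂ)
    (D : Derivation ℂ (MvPolynomial (Fin n) ℂ) (MvPolynomial (Fin n) ℂ))
    (hD0 : D (X 0) = Polynomial.aeval (X 0) p)
    (hDi : ∀ i : Fin n, i ≠ 0 → D (X i) = MvPolynomial.C (ξ i) * X i) :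
    (∀ f g : MvPolynomial (Fin n) ℂ, f ≠ 0 → D f = g * f →
      ∃ q : Polynomial ℂ, q.natDegree ≤ d - 1 ∧ g = Polynomial.aeval (X 0) q) ∧
    ∃ V : Submodule ℂ (MvPolynomial (Fin n) ℂ), Module.finrank ℂ V = d ∧
      ∀ f g : MvPolynomial (Fin n) ℂ, f ≠ 0 → D f = g * f → g ∈ V := by
  classical
  have hD (i j : Fin n) : degreeOf i (D (X j)) ≤
      degreeOf i (X j : MvPolynomial (Fin n) ℂ) + if i = 0 then d - 1 else 0 := by
    rcases eq_or_ne j 0 with rfl | hj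
    · rw [hD0, ← Polynomial.toMvPolynomial]
      rcases eq_or_ne i 0 with rfl | hi
      · rw [Polynomial.degreeOf_toMvPolynomial_self, degreeOf_X_self, if_pos rfl]
        omega
      · rw [Polynomial.degreeOf_toMvPolynomial_of_ne hi]
        exact Nat.zero_le _
    · rw [hDi j hj]
      exact (degreeOf_C_mul_le _ _ _).trans (Nat.le_add_right _ _)
  have hcofactor : ∀ f g : MvPolynomial (Fin n) ℂ, f ≠ 0 → D f = g * f →
      ∃ q : Polynomial ℂ, q.natDegree ≤ d - 1 ∧ g = Polynomial.aeval (X 0) q := by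
    intro f g hf hfg
    have hg i := degreeOf_le_of_derivation_eq_mul D (hD i) hf hfg
    obtain ⟨q, rfl⟩ := Polynomial.exists_toMvPolynomial_eq_of_degreeOf_eq_zero (g := g) (j := 0)
      fun i hi => Nat.le_zero.mp (by simpa [hi] using hg i)
    exact ⟨q, by simpa [Polynomial.degreeOf_toMvPolynomial_self] using hg 0, rfl⟩
  refine ⟨hcofactor, (Polynomial.degreeLT ℂ d).map (Polynomial.toMvPolynomial 0).toLinearMap,
    Polynomial.finrank_map_toMvPolynomial_degreeLT 0 d, fun f g hf hfg => ?_⟩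
  obtain ⟨q, hq, rfl⟩ := hcofactor f g hf hfg
  refine Submodule.mem_map_of_mem (Polynomial.mem_degreeLT.mpr ?_)
  exact Polynomial.degree_le_natDegree.trans_lt (by exact_mod_cast (by omega : q.natDegree < d))

/-- for D = p(X₁)∂_{X₁} + Σ_{i≥2} ξᵢXᵢ∂_{Xᵢ} with deg p = d ≥ 1 and
ξᵢ ≠ 0, every cofactor of a Darboux polynomial is a polynomial in X₁ alone of degree
at most d − 1; consequently all cofactors lie in a ℂ-vector space of dimension d. -/
theorem cofactor_univariate_of_product_system {n d : ℕ} [NeZero n]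
    (p : Polynomial ℂ) (hdeg : p.natDegree = d) (hd : 1 ≤ d)
    (ξ : Fin n → ℂ) (hξ : ∀ i : Fin n, i ≠ 0 → ξ i ≠ 0)
    (D : Derivation ℂ (MvPolynomial (Fin n) ℂ) (MvPolynomial (Fin n) ℂ))
    (hD0 : D (X 0) = Polynomial.aeval (X 0) p)
    (hDi : ∀ i : Fin n, i ≠ 0 → D (X i) = MvPolynomial.C (ξ i) * X i) :
    (∀ f g : MvPolynomial (Fin n) ℂ, f ≠ 0 → D f = g * f →
      ∃ q : Polynomial ℂ, q.natDegree ≤ d - 1 ∧ g = Polynomial.aeval (X 0) q) ∧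
    ∃ V : Submodule ℂ (MvPolynomial (Fin n) ℂ), Module.finrank ℂ V = d ∧
      ∀ f g : MvPolynomial (Fin n) ℂ, f ≠ 0 → D f = g * f → g ∈ V :=
  cofactor_univariate_of_product_system_general p hdeg hd ξ D hD0 hDi
end
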